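/- arXiv:1803.03969 — 9 statements merged into one kernel-verified Lean document; each statement's English description precedes it below -/
import Mathlib

section
/- Let G be a finite group with |G| = n ≥ 2 and S = S⁻¹ ⊆ G a symmetric set with |S| = d ≥ 1, and let h denote the vertex Cheeger constant of the Cayley graph C(G,S). Then the second largest eigenvalue t₂ of the normalized adjacency matrix T of C(G,S) satisfies t₂ ≤ 1 - h² / (2d²); equivalently, the second smallest eigenvalue λ₂ of the normalized Laplacian L = I - T satisfies λ₂ ≥ h² / (2d²). -/
open Finset
open scoped Pointwise

/-!
Let `v` be a `t`-eigenvector of `T` orthogonal to the constants; replacing `v` by `-v` we may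
assume that its positive part `g = v⁺` is supported on at most half of the vertices. As `T` is
entrywise nonnegative, `g` has Rayleigh quotient at least `t`, i.e.
`∑ T x y (g x - g y)² ≤ 2 (1 - t) ‖g‖²`. Writing `g²` as a positive combination of indicators of
its nested superlevel sets (coarea) gives `∑ T x y |g x² - g y²| ≥ 2 φ ‖g‖²`, where `φ = h / d`
bounds the edge expansion of small sets: every vertex of `SA \ A` receives an edge from `A`.
Cauchy–Schwarz bounds the left side by `(∑ T x y (g x - g y)²)^½ (4 ‖g‖²)^½`, and comparing the
two estimates yields `φ² ≤ 2 (1 - t)`.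
-/

lemma abs_sub_eq_mul_abs_indicator_sub_add {α : Type*} {f : α → ℝ} {A : Set α} {m : ℝ}
    (hm : 0 ≤ m) (hfA : ∀ x ∈ A, m ≤ f x) (hfAc : ∀ x ∉ A, f x = 0) (x y : α) :
    |f x - f y| = m * |A.indicator 1 x - A.indicator 1 y| +
      |(f - m • A.indicator 1 : α → ℝ) x - (f - m • A.indicator 1 : α → ℝ) y| := by
  by_cases hx : x ∈ A <;> by_cases hy : y ∈ A
  · simp [hx, hy]
  · have hmx := hfA x hx
    simp [hx, hy, hfAc, abs_of_nonneg (hm.trans hmx), abs_of_nonneg (sub_nonneg.2 hmx)]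
  · have hmy := hfA y hy
    simp [hx, hy, hfAc, abs_of_nonneg (hm.trans hmy), abs_of_nonpos (sub_nonpos.2 hmy)]
  · simp [hx, hy, hfAc]

namespace Matrix

variable {α : Type*} [Fintype α] {T : Matrix α α ℝ}

lemma sum_sum_mul_left_eq_sum (hrow : ∀ x, ∑ y, T x y = 1) (f : α → ℝ) :
    ∑ x, ∑ y, T x y * f x = ∑ x, f x := by
  simp [← Finset.sum_mul, hrow]

lemma sum_sum_mul_right_eq_sum (hT : T.IsSymm) (hrow : ∀ x, ∑ y, T x y = 1) (f : α → ℝ) :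
    ∑ x, ∑ y, T x y * f y = ∑ x, f x := by
  rw [Finset.sum_comm]
  simp_rw [hT.apply]
  exact sum_sum_mul_left_eq_sum hrow f

lemma sum_sum_mul_sub_sq (hT : T.IsSymm) (hrow : ∀ x, ∑ y, T x y = 1) (g : α → ℝ) :
    ∑ x, ∑ y, T x y * (g x - g y) ^ 2 =
      2 * (∑ x, g x ^ 2 - ∑ x, ∑ y, T x y * (g x * g y)) := by
  have h : ∀ x y, T x y * (g x - g y) ^ 2 =
      T x y * g x ^ 2 + T x y * g y ^ 2 - 2 * (T x y * (g x * g y)) := fun x y => by ring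
  simp only [h, Finset.sum_add_distrib, Finset.sum_sub_distrib, ← Finset.mul_sum,
    sum_sum_mul_left_eq_sum hrow, sum_sum_mul_right_eq_sum hT hrow]
  ring

lemma sum_sum_mul_add_sq_add_sum_sum_mul_sub_sq (hT : T.IsSymm)
    (hrow : ∀ x, ∑ y, T x y = 1) (g : α → ℝ) :
    ∑ x, ∑ y, T x y * (g x + g y) ^ 2 + ∑ x, ∑ y, T x y * (g x - g y) ^ 2 =
      4 * ∑ x, g x ^ 2 := by
  have h : ∀ x y, T x y * (g x + g y) ^ 2 + T x y * (g x - g y) ^ 2 =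
      2 * (T x y * g x ^ 2) + 2 * (T x y * g y ^ 2) := fun x y => by ring
  simp_rw [← Finset.sum_add_distrib, h]
  simp only [Finset.sum_add_distrib, ← Finset.mul_sum, sum_sum_mul_left_eq_sum hrow,
    sum_sum_mul_right_eq_sum hT hrow]
  ring

lemma sum_sq_posPart_mul_le (hT0 : ∀ x y, 0 ≤ T x y) {t : ℝ} {v : α → ℝ}
    (hv : T *ᵥ v = t • v) :
    t * ∑ x, (v x)⁺ ^ 2 ≤ ∑ x, ∑ y, T x y * ((v x)⁺ * (v y)⁺) := by
  rw [Finset.mul_sum]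
  refine Finset.sum_le_sum fun x _ => ?_
  rcases le_or_gt (v x) 0 with hx | hx
  · simp [posPart_eq_zero.2 hx]
  have hrow : t * v x ≤ ∑ y, T x y * (v y)⁺ := by
    rw [← smul_eq_mul, ← Pi.smul_apply, ← hv]
    exact Finset.sum_le_sum fun y _ => mul_le_mul_of_nonneg_left (le_posPart _) (hT0 x y)
  calc t * (v x)⁺ ^ 2 = (v x)⁺ * (t * v x) := by rw [posPart_eq_self.2 hx.le]; ring
    _ ≤ (v x)⁺ * ∑ y, T x y * (v y)⁺ := mul_le_mul_of_nonneg_left hrow (posPart_nonneg _)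
    _ = ∑ y, T x y * ((v x)⁺ * (v y)⁺) := by rw [Finset.mul_sum]; congr! 1; ring

lemma sq_sum_sum_mul_abs_sq_sub_sq_le (hT0 : ∀ x y, 0 ≤ T x y) (g : α → ℝ) :
    (∑ x, ∑ y, T x y * |g x ^ 2 - g y ^ 2|) ^ 2 ≤
      (∑ x, ∑ y, T x y * (g x - g y) ^ 2) * ∑ x, ∑ y, T x y * (g x + g y) ^ 2 := by
  simp only [← Fintype.sum_prod_type']
  refine Finset.sum_sq_le_sum_mul_sum_of_sq_le_mul _
    (fun p _ => mul_nonneg (hT0 p.1 p.2) (sq_nonneg _))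
    (fun p _ => mul_nonneg (hT0 p.1 p.2) (sq_nonneg _)) fun p _ => le_of_eq ?_
  rw [mul_pow, sq_abs]
  ring

variable [DecidableEq α]

def edgeCut (T : Matrix α α ℝ) (A : Finset α) : ℝ := ∑ x ∈ A, ∑ y ∈ Aᶜ, T x y

lemma sum_sum_mul_abs_indicator_sub (hT : T.IsSymm) (A : Finset α) :
    ∑ x, ∑ y, T x y * |(A : Set α).indicator 1 x - (A : Set α).indicator 1 y| =
      2 * edgeCut T A := by
  have hin : ∀ x ∈ A, ∑ y, T x y * |(A : Set α).indicator 1 x - (A : Set α).indicator 1 y| =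
      ∑ y ∈ Aᶜ, T x y := fun x hx => by
    rw [← Finset.sum_add_sum_compl A, Finset.sum_eq_zero fun y hy => by simp [hx, hy], zero_add]
    exact Finset.sum_congr rfl fun y hy => by simp [hx, Finset.mem_compl.1 hy]
  have hout : ∀ x ∈ Aᶜ, ∑ y, T x y * |(A : Set α).indicator 1 x - (A : Set α).indicator 1 y| =
      ∑ y ∈ A, T x y := fun x hx => by
    rw [← Finset.sum_add_sum_compl A, Finset.sum_eq_zero (s := Aᶜ) fun y hy => by
      simp [Finset.mem_compl.1 hx, Finset.mem_compl.1 hy], add_zero]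
    exact Finset.sum_congr rfl fun y hy => by simp [Finset.mem_compl.1 hx, hy]
  have hswap : ∑ x ∈ Aᶜ, ∑ y ∈ A, T x y = edgeCut T A := Finset.sum_comm.trans
    (Finset.sum_congr rfl fun y _ => Finset.sum_congr rfl fun x _ => hT.apply y x)
  rw [← Finset.sum_add_sum_compl A, Finset.sum_congr rfl hin, Finset.sum_congr rfl hout, hswap,
    edgeCut, two_mul]

theorem two_mul_mul_sum_le_sum_sum_mul_abs_sub (hT : T.IsSymm) {φ : ℝ}
    (hφ : ∀ A : Finset α, A.Nonempty → 2 * #A ≤ Fintype.card α → φ * #A ≤ edgeCut T A)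
    {P : Finset α} (hP : 2 * #P ≤ Fintype.card α) (f : α → ℝ) (hf0 : 0 ≤ f)
    (hfP : ∀ x ∉ P, f x = 0) :
    2 * φ * ∑ x, f x ≤ ∑ x, ∑ y, T x y * |f x - f y| := by
  induction hk : #{x | 0 < f x} using Nat.strong_induction_on generalizing f with
  | _ k ih =>
  set A : Finset α := {x | 0 < f x}
  have hfA : ∀ x ∉ A, f x = 0 := fun x hx =>
    le_antisymm (not_lt.1 fun h => hx (by simp [A, h])) (hf0 x)
  rcases A.eq_empty_or_nonempty with hAe | hAne
  · obtain rfl : f = 0 := funext fun x => hfA x (by simp [hAe])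
    simp
  -- Peel off the layer `f a • 𝟙_A`, `f a` being the least positive value of `f`; what remains
  -- vanishes at `a`, so the induction hypothesis applies to it.
  obtain ⟨a, ha, hmin⟩ := A.exists_min_image f hAne
  set f' := f - f a • (A : Set α).indicator 1
  have hf'A : ∀ x ∈ A, f' x = f x - f a := fun x hx => by simp [f', hx]
  have hf'Ac : ∀ x ∉ A, f' x = 0 := fun x hx => by simp [f', hx, hfA x hx]
  have hf'0 : 0 ≤ f' := fun x => by
    by_cases hx : x ∈ A
    · simpa [hf'A x hx] using hmin x hx
    · simp [hf'Ac x hx]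
  have hsum : ∑ x, f x = f a * #A + ∑ x, f' x := by
    simp [f', Finset.sum_sub_distrib, Set.indicator_apply]
    ring
  have hcard : #{x | 0 < f' x} < k := by
    refine hk ▸ (Finset.card_le_card fun x hx => ?_).trans_lt (Finset.card_erase_lt_of_mem ha)
    have hx' : 0 < f' x := (Finset.mem_filter.1 hx).2
    have hxA : x ∈ A := by_contra fun h => hx'.ne' (hf'Ac x h)
    exact Finset.mem_erase.2 ⟨fun h => by simp [h, hf'A a ha] at hx', hxA⟩
  have hAP : A ⊆ P := fun x hx => by_contra fun h => (Finset.mem_filter.1 hx).2.ne' (hfP x h)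
  calc 2 * φ * ∑ x, f x = f a * (2 * (φ * #A)) + 2 * φ * ∑ x, f' x := by rw [hsum]; ring
    _ ≤ f a * (2 * edgeCut T A) + ∑ x, ∑ y, T x y * |f' x - f' y| := by
        gcongr
        · exact hf0 a
        · exact hφ A hAne (le_trans (by gcongr) hP)
        · exact ih _ hcard f' hf'0 (fun x hx => hf'Ac x fun h => hx (hAP h)) rfl
    _ = ∑ x, ∑ y, T x y * |f x - f y| := by
        rw [← sum_sum_mul_abs_indicator_sub hT A, Finset.mul_sum, ← Finset.sum_add_distrib]
        refine Finset.sum_congr rfl fun x _ => ?_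
        rw [Finset.mul_sum, ← Finset.sum_add_distrib]
        refine Finset.sum_congr rfl fun y _ => ?_
        rw [abs_sub_eq_mul_abs_indicator_sub_add (hf0 a) hmin (fun x hx => hfA x hx)]
        ring

theorem le_one_sub_sq_div_two_of_exists_pos (hT0 : ∀ x y, 0 ≤ T x y) (hT : T.IsSymm)
    (hrow : ∀ x, ∑ y, T x y = 1) {φ : ℝ} (hφ0 : 0 ≤ φ)
    (hφ : ∀ A : Finset α, A.Nonempty → 2 * #A ≤ Fintype.card α → φ * #A ≤ edgeCut T A)
    {t : ℝ} {v : α → ℝ} (hv : T *ᵥ v = t • v) (hpos : ∃ x, 0 < v x)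
    (hcard : 2 * #{x | 0 < v x} ≤ Fintype.card α) :
    t ≤ 1 - φ ^ 2 / 2 := by
  set g : α → ℝ := fun x => (v x)⁺
  set N := ∑ x, g x ^ 2
  set Q := ∑ x, ∑ y, T x y * (g x - g y) ^ 2
  set R := ∑ x, ∑ y, T x y * (g x + g y) ^ 2
  have hN : 0 < N := by
    obtain ⟨x, hx⟩ := hpos
    exact (pow_pos (posPart_pos_iff.2 hx) 2).trans_le
      (Finset.single_le_sum (fun y _ => sq_nonneg (g y)) (Finset.mem_univ x))
  have hQ : Q ≤ 2 * (1 - t) * N := by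
    have hray : t * N ≤ ∑ x, ∑ y, T x y * (g x * g y) := sum_sq_posPart_mul_le hT0 hv
    have hQ_eq : Q = 2 * (N - ∑ x, ∑ y, T x y * (g x * g y)) := sum_sum_mul_sub_sq hT hrow g
    linarith
  have hQ0 : 0 ≤ Q :=
    Finset.sum_nonneg fun x _ => Finset.sum_nonneg fun y _ => mul_nonneg (hT0 x y) (sq_nonneg _)
  have hR0 : 0 ≤ R :=
    Finset.sum_nonneg fun x _ => Finset.sum_nonneg fun y _ => mul_nonneg (hT0 x y) (sq_nonneg _)
  have hR : R ≤ 4 * N := by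
    linarith [sum_sum_mul_add_sq_add_sum_sum_mul_sub_sq hT hrow g]
  have hcoarea : 2 * φ * N ≤ ∑ x, ∑ y, T x y * |g x ^ 2 - g y ^ 2| :=
    two_mul_mul_sum_le_sum_sum_mul_abs_sub hT hφ hcard (fun x => g x ^ 2)
      (fun x => sq_nonneg (g x)) fun x hx => by simpa [g] using hx
  have hsq : (2 * φ * N) ^ 2 ≤ 2 * (1 - t) * N * (4 * N) :=
    calc (2 * φ * N) ^ 2 ≤ (∑ x, ∑ y, T x y * |g x ^ 2 - g y ^ 2|) ^ 2 := by gcongr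
      _ ≤ Q * R := sq_sum_sum_mul_abs_sq_sub_sq_le hT0 g
      _ ≤ 2 * (1 - t) * N * (4 * N) := mul_le_mul hQ hR hR0 (hQ0.trans hQ)
  have hφt : φ ^ 2 ≤ 2 * (1 - t) :=
    le_of_mul_le_mul_right (a := 4 * N ^ 2) (by linarith) (by positivity)
  linarith

theorem le_one_sub_sq_div_two_of_sum_eq_zero (hT0 : ∀ x y, 0 ≤ T x y) (hT : T.IsSymm)
    (hrow : ∀ x, ∑ y, T x y = 1) {φ : ℝ} (hφ0 : 0 ≤ φ)
    (hφ : ∀ A : Finset α, A.Nonempty → 2 * #A ≤ Fintype.card α → φ * #A ≤ edgeCut T A)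
    {t : ℝ} {v : α → ℝ} (hv0 : v ≠ 0) (hsum : ∑ x, v x = 0) (hv : T *ᵥ v = t • v) :
    t ≤ 1 - φ ^ 2 / 2 := by
  have hpos : ∀ w : α → ℝ, w ≠ 0 → ∑ x, w x = 0 → ∃ x, 0 < w x := fun w hw hw0 => by
    obtain ⟨x, hx⟩ := Function.ne_iff.1 hw
    obtain ⟨y, -, hy⟩ :=
      Finset.exists_pos_of_sum_zero_of_exists_nonzero w hw0 ⟨x, Finset.mem_univ x, hx⟩
    exact ⟨y, hy⟩
  have hsplit : #{x | 0 < v x} + #{x | 0 < (-v) x} ≤ Fintype.card α := by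
    rw [← Finset.card_union_of_disjoint]
    · exact Finset.card_le_univ _
    · exact Finset.disjoint_filter.2 fun x _ h => by simpa using h.le
  rcases (by omega : 2 * #{x | 0 < v x} ≤ Fintype.card α ∨
      2 * #{x | 0 < (-v) x} ≤ Fintype.card α) with h | h
  · exact le_one_sub_sq_div_two_of_exists_pos hT0 hT hrow hφ0 hφ hv (hpos v hv0 hsum) h
  · refine le_one_sub_sq_div_two_of_exists_pos hT0 hT hrow hφ0 hφ ?_
      (hpos (-v) (neg_ne_zero.2 hv0) (by simp [hsum])) h
    rw [mulVec_neg, hv, smul_neg]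

end Matrix

section Cayley

variable {G : Type*} [Group G] [DecidableEq G]

noncomputable def cayleyNormAdj (S : Finset G) : Matrix G G ℝ :=
  Matrix.of fun x y => if y * x⁻¹ ∈ S then 1 / (#S : ℝ) else 0

lemma cayleyNormAdj_nonneg (S : Finset G) (x y : G) : 0 ≤ cayleyNormAdj S x y := by
  simp only [cayleyNormAdj, Matrix.of_apply]
  split_ifs <;> positivity

lemma isSymm_cayleyNormAdj {S : Finset G} (hS : S⁻¹ = S) : (cayleyNormAdj S).IsSymm :=
  Matrix.IsSymm.ext fun x y => by
    have hmem : x * y⁻¹ ∈ S ↔ y * x⁻¹ ∈ S := by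
      simpa [hS] using Finset.mem_inv' (s := S) (a := x * y⁻¹)
    simp only [cayleyNormAdj, Matrix.of_apply, hmem]

variable [Fintype G]

lemma card_filter_mul_inv_mem (S : Finset G) (x : G) : #{y | y * x⁻¹ ∈ S} = #S := by
  rw [← Finset.card_mul_singleton S x]
  congr 1
  ext y
  simp only [Finset.mem_filter, Finset.mem_univ, true_and, Finset.mem_mul, Finset.mem_singleton,
    exists_eq_left]
  exact ⟨fun h => ⟨_, h, inv_mul_cancel_right y x⟩, by rintro ⟨s, hs, rfl⟩; simpa⟩

lemma sum_cayleyNormAdj {S : Finset G} (hS : S.Nonempty) (x : G) :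
    ∑ y, cayleyNormAdj S x y = 1 := by
  simp [cayleyNormAdj, ← Finset.sum_filter, card_filter_mul_inv_mem, hS.ne_empty]

lemma card_mul_sdiff_div_le_edgeCut (S A : Finset G) :
    (#((S * A) \ A) : ℝ) / #S ≤ Matrix.edgeCut (cayleyNormAdj S) A := by
  have hreach : ∀ y ∈ (S * A) \ A, 1 / (#S : ℝ) ≤ ∑ x ∈ A, cayleyNormAdj S x y := by
    intro y hy
    obtain ⟨s, hs, a, ha, rfl⟩ := Finset.mem_mul.1 (Finset.mem_sdiff.1 hy).1
    refine le_of_eq_of_le ?_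
      (Finset.single_le_sum (fun x _ => cayleyNormAdj_nonneg S x (s * a)) ha)
    simp [cayleyNormAdj, hs]
  calc (#((S * A) \ A) : ℝ) / #S = ∑ y ∈ (S * A) \ A, 1 / (#S : ℝ) := by simp [div_eq_mul_inv]
    _ ≤ ∑ y ∈ (S * A) \ A, ∑ x ∈ A, cayleyNormAdj S x y := Finset.sum_le_sum hreach
    _ ≤ ∑ y ∈ Aᶜ, ∑ x ∈ A, cayleyNormAdj S x y :=
        Finset.sum_le_sum_of_subset_of_nonneg
          (fun y hy => by simpa using (Finset.mem_sdiff.1 hy).2)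
          fun y _ _ => Finset.sum_nonneg fun x _ => cayleyNormAdj_nonneg S x y
    _ = Matrix.edgeCut (cayleyNormAdj S) A := Finset.sum_comm

noncomputable def vertexCheegerConstant (S : Finset G) : ℝ :=
  sInf {r : ℝ | ∃ A : Finset G, A.Nonempty ∧ (#A : ℝ) ≤ (Fintype.card G : ℝ) / 2 ∧
    r = (#((S * A) \ A) : ℝ) / #A}

lemma vertexCheegerConstant_nonneg (S : Finset G) : 0 ≤ vertexCheegerConstant S :=
  Real.sInf_nonneg fun _ ⟨_, _, _, hr⟩ => hr ▸ by positivity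

lemma vertexCheegerConstant_mul_card_le (S : Finset G) {A : Finset G} (hA : A.Nonempty)
    (hcard : 2 * #A ≤ Fintype.card G) : vertexCheegerConstant S * #A ≤ #((S * A) \ A) := by
  have hle : vertexCheegerConstant S ≤ #((S * A) \ A) / #A := by
    refine csInf_le ⟨0, fun _ ⟨_, _, _, hr⟩ => hr ▸ by positivity⟩ ⟨A, hA, ?_, rfl⟩
    rw [le_div_iff₀ two_pos]
    exact_mod_cast (by omega : #A * 2 ≤ Fintype.card G)
  rwa [le_div_iff₀ (by exact_mod_cast hA.card_pos)] at hle

end Cayley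

theorem discrete_cheeger_for_cayley_general {G : Type*} [Group G] [Fintype G] [DecidableEq G]
    (S : Finset G) (d : ℕ) (hd : S.card = d) (hd1 : 1 ≤ d) (hSsymm : S⁻¹ = S)
    (h : ℝ)
    (hh : h = sInf {r : ℝ | ∃ A : Finset G, A.Nonempty ∧
      (A.card : ℝ) ≤ (Fintype.card G : ℝ) / 2 ∧
      r = (((S * A) \ A).card : ℝ) / A.card}) :
    ∀ t : ℝ, ∀ v : G → ℝ, v ≠ 0 → (∑ x : G, v x) = 0 →
      (Matrix.of fun x y : G => if y * x⁻¹ ∈ S then (1 : ℝ) / d else 0).mulVec v = t • v →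
      t ≤ 1 - h ^ 2 / (2 * (d : ℝ) ^ 2) := by
  intro t v hv0 hvsum hv
  subst hd
  obtain rfl : h = vertexCheegerConstant S := hh
  have hS : (0 : ℝ) < #S := by exact_mod_cast hd1
  have hexpansion : ∀ A : Finset G, A.Nonempty → 2 * #A ≤ Fintype.card G →
      vertexCheegerConstant S / #S * #A ≤ Matrix.edgeCut (cayleyNormAdj S) A :=
    fun A hA hcard => calc
      vertexCheegerConstant S / #S * #A = vertexCheegerConstant S * #A / #S :=
        div_mul_eq_mul_div ..
      _ ≤ #((S * A) \ A) / #S := by gcongr; exact vertexCheegerConstant_mul_card_le S hA hcard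
      _ ≤ Matrix.edgeCut (cayleyNormAdj S) A := card_mul_sdiff_div_le_edgeCut S A
  calc t ≤ 1 - (vertexCheegerConstant S / #S) ^ 2 / 2 :=
        Matrix.le_one_sub_sq_div_two_of_sum_eq_zero (cayleyNormAdj_nonneg S)
          (isSymm_cayleyNormAdj hSsymm) (sum_cayleyNormAdj (Finset.card_pos.1 hd1))
          (div_nonneg (vertexCheegerConstant_nonneg S) hS.le) hexpansion hv0 hvsum hv
    _ = 1 - vertexCheegerConstant S ^ 2 / (2 * (#S : ℝ) ^ 2) := by ring

/-- Let `G` be a finite group with `|G| = n ≥ 2`, `S = S⁻¹ ⊆ G` symmetric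
with `|S| = d ≥ 1`, and `h` the vertex Cheeger constant of `C(G,S)`. Then the second largest
eigenvalue `t₂` of the normalized adjacency matrix `T` satisfies `t₂ ≤ 1 - h²/(2d²)`;
equivalently `λ₂ ≥ h²/(2d²)`. Since `T` is symmetric and the all-ones vector is a
`1`-eigenvector, `t₂ ≤ c` is expressed as: every eigenvalue of `T` admitting an eigenvector
orthogonal to the constants is at most `c`. -/
theorem discrete_cheeger_for_cayley {G : Type*} [Group G] [Fintype G] [DecidableEq G]
    (n : ℕ) (hn : Fintype.card G = n) (hn2 : 2 ≤ n)
    (S : Finset G) (d : ℕ) (hd : S.card = d) (hd1 : 1 ≤ d) (hSsymm : S⁻¹ = S)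
    (h : ℝ)
    (hh : h = sInf {r : ℝ | ∃ A : Finset G, A.Nonempty ∧
      (A.card : ℝ) ≤ (Fintype.card G : ℝ) / 2 ∧
      r = (((S * A) \ A).card : ℝ) / A.card}) :
    ∀ t : ℝ, ∀ v : G → ℝ, v ≠ 0 → (∑ x : G, v x) = 0 →
      (Matrix.of fun x y : G => if y * x⁻¹ ∈ S then (1 : ℝ) / d else 0).mulVec v = t • v →
      t ≤ 1 - h ^ 2 / (2 * (d : ℝ) ^ 2) :=
  discrete_cheeger_for_cayley_general S d hd hd1 hSsymm h hh
end

section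
/- Let G be a finite group and S = S⁻¹ ⊆ G a symmetric set with |S| = d. Suppose that |SA \ A| ≥ ε'|A| for every set A ⊆ G with |A| ≤ |G|/2 and some ε' > 0. Then for every set A ⊆ G with |A| ≥ |G|/2 one has |SA \ A| ≥ (ε'/d) · |G \ A|. -/
open Finset
open scoped Pointwise

/-- If `|S A \ A| ≥ ε' |A|` for every `A ⊆ G` with `|A| ≤ |G|/2`,
then `|S A \ A| ≥ (ε'/d) |G \ A|` for every `A ⊆ G` with `|A| ≥ |G|/2`. -/
theorem expansion_of_large_sets {G : Type*} [Group G] [Fintype G] [DecidableEq G]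
    (S : Finset G) (d : ℕ) (hd : S.card = d) (hSsymm : S⁻¹ = S)
    (ε' : ℝ) (hε' : 0 < ε')
    (hexp : ∀ A : Finset G, (A.card : ℝ) ≤ (Fintype.card G : ℝ) / 2 →
      ε' * A.card ≤ (((S * A) \ A).card : ℝ)) :
    ∀ A : Finset G, (Fintype.card G : ℝ) / 2 ≤ (A.card : ℝ) →
      ε' / d * (Aᶜ.card : ℝ) ≤ (((S * A) \ A).card : ℝ) := by
  intro A hA
  rcases Nat.eq_zero_or_pos d with hd0 | hdpos
  · simp [hd0]
  -- B = Aᶜ is small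
  have hBsmall : ((Aᶜ.card : ℝ)) ≤ (Fintype.card G : ℝ) / 2 := by
    have : (Aᶜ.card : ℝ) = (Fintype.card G : ℝ) - A.card := by
      rw [Finset.card_compl, Nat.cast_sub (Finset.card_le_univ A)]
    linarith
  have h1 := hexp Aᶜ hBsmall
  -- subset claim : (S * Aᶜ) \ Aᶜ ⊆ S * ((S * A) \ A)
  have hsub : (S * Aᶜ) \ Aᶜ ⊆ S * ((S * A) \ A) := by
    intro x hx
    rw [Finset.mem_sdiff] at hx
    obtain ⟨hxS, hxA⟩ := hx
    rw [Finset.mem_mul] at hxS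
    obtain ⟨s, hs, b, hb, rfl⟩ := hxS
    rw [Finset.mem_compl, not_not] at hxA
    rw [Finset.mem_mul]
    refine ⟨s, hs, b, ?_, rfl⟩
    rw [Finset.mem_sdiff]
    constructor
    · rw [Finset.mem_mul]
      refine ⟨s⁻¹, ?_, s * b, hxA, by group⟩
      rw [← hSsymm]; exact Finset.inv_mem_inv hs
    · simpa using hb
  have hcard : ((S * Aᶜ) \ Aᶜ).card ≤ d * ((S * A) \ A).card := by
    calc ((S * Aᶜ) \ Aᶜ).card ≤ (S * ((S * A) \ A)).card := Finset.card_le_card hsub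
      _ ≤ S.card * ((S * A) \ A).card := Finset.card_mul_le
      _ = d * ((S * A) \ A).card := by rw [hd]
  have hcardR : (((S * Aᶜ) \ Aᶜ).card : ℝ) ≤ d * ((S * A) \ A).card := by
    exact_mod_cast hcard
  have hdR : (0 : ℝ) < d := by exact_mod_cast hdpos
  rw [div_mul_eq_mul_div, div_le_iff₀ hdR]
  calc ε' * (Aᶜ.card : ℝ) ≤ (((S * Aᶜ) \ Aᶜ).card : ℝ) := h1
    _ ≤ d * ((S * A) \ A).card := hcardR
    _ = (((S * A) \ A).card : ℝ) * d := by ring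
end

section
/- Let G be a finite group and S = S⁻¹ ⊆ G a symmetric set with |S| = d. Then for every subset A ⊆ G, writing A^c = G \ A, one has |SA^c \ A^c| ≤ d · |SA \ A|. -/
open Finset
open scoped Pointwise

/-- For a finite group `G` and a symmetric set `S ⊆ G` with `|S| = d`,
for every subset `A ⊆ G`, one has `|S Aᶜ \ Aᶜ| ≤ d * |S A \ A|`. -/
theorem card_mul_compl_sdiff_compl_le {G : Type*} [Group G] [Fintype G] [DecidableEq G]
    (S : Finset G) (d : ℕ) (hd : S.card = d) (hSsymm : S⁻¹ = S) (A : Finset G) :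
    ((S * Aᶜ) \ Aᶜ).card ≤ d * ((S * A) \ A).card := by
  have hsub : (S * Aᶜ) \ Aᶜ ⊆ S * ((S * A) \ A) := by
    intro x hx
    rw [mem_sdiff] at hx
    obtain ⟨hx1, hx2⟩ := hx
    rw [Finset.mem_compl, not_not] at hx2
    obtain ⟨s, hs, y, hy, hsy⟩ := Finset.mem_mul.mp hx1
    rw [Finset.mem_compl] at hy
    have hsinv : s⁻¹ ∈ S := by rw [← hSsymm]; exact inv_mem_inv hs
    have hyA : y ∈ (S * A) \ A := by
      rw [mem_sdiff]
      refine ⟨Finset.mem_mul.mpr ⟨s⁻¹, hsinv, x, hx2, by rw [← hsy]; group⟩, hy⟩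
    exact Finset.mem_mul.mpr ⟨s, hs, y, hyA, hsy⟩
  calc ((S * Aᶜ) \ Aᶜ).card ≤ (S * ((S * A) \ A)).card := Finset.card_le_card hsub
    _ ≤ S.card * ((S * A) \ A).card := Finset.card_mul_le
    _ = d * ((S * A) \ A).card := by rw [hd]
end

section
/- Let G be a finite group and S = S⁻¹ ⊆ G a symmetric set with |S| = d. Suppose S is ε-combinatorially expanding for some ε > 0, i.e. |SX \ X| ≥ ε|X| for every X ⊆ G with |X| ≤ |G|/2. Let β ≥ 0 and let A ⊆ G satisfy |A ∪ SA| ≥ |G|/2 and |S²A \ A| ≤ β·|A|. Then |G| ≤ (2 + β + dβ/ε)·|A|, i.e. (1/(2 + β + dβ/ε))·|G| ≤ |A|. -/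
open Finset
open scoped Pointwise

set_option maxHeartbeats 1000000 in
/-- If `S = S⁻¹ ⊆ G`, `|S| = d`, is `ε`-combinatorially expanding, `β ≥ 0`,
and `A ⊆ G` satisfies `|A ∪ SA| ≥ |G|/2` and `|S²A \ A| ≤ β|A|`, then
`|G| ≤ (2 + β + dβ/ε)|A|`. -/
theorem card_lower_bound {G : Type*} [Group G] [Fintype G] [DecidableEq G]
    (S : Finset G) (d : ℕ) (hd : S.card = d) (hSsymm : S⁻¹ = S)
    (ε : ℝ) (hε : 0 < ε)
    (hexp : ∀ X : Finset G, (X.card : ℝ) ≤ (Fintype.card G : ℝ) / 2 →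
      ε * X.card ≤ (((S * X) \ X).card : ℝ))
    (β : ℝ) (hβ : 0 ≤ β) (A : Finset G)
    (hunion : (Fintype.card G : ℝ) / 2 ≤ ((A ∪ S * A).card : ℝ))
    (hsmall : (((S * S * A) \ A).card : ℝ) ≤ β * A.card) :
    (Fintype.card G : ℝ) ≤ (2 + β + d * β / ε) * A.card := by
  classical
  have hβdε : (0:ℝ) ≤ (d:ℝ) * β / ε := by positivity
  have haR : (0:ℝ) ≤ (A.card : ℝ) := by positivity
  set n := Fintype.card G with hn
  -- trivial case: A empty
  by_cases hA : A = ∅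
  · have h0 : ((A ∪ S * A).card : ℝ) = 0 := by simp [hA]
    rw [h0] at hunion
    have hA0 : ((A.card : ℝ)) = 0 := by simp [hA]
    rw [hA0]
    linarith
  -- trivial case: S empty
  by_cases hS : S = ∅
  · have h0 : S * A = ∅ := by simp [hS]
    rw [h0, union_empty] at hunion
    have hd0 : d = 0 := by rw [hS] at hd; simpa using hd.symm
    rw [hd0]
    push_cast
    have h1 : (2 + β + 0 * β / ε) * (A.card:ℝ) = 2 * A.card + β * A.card := by ring
    rw [h1]
    nlinarith [mul_nonneg hβ haR]
  obtain ⟨s₀, hs₀⟩ : S.Nonempty := nonempty_iff_ne_empty.mpr hS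
  have hinv : ∀ s ∈ S, s⁻¹ ∈ S := by
    intro s hs
    rw [← hSsymm, mem_inv']
    simpa using hs
  set T : Finset G := S * S * A with hT
  set K : Finset G := T \ A with hK
  set B2 : Finset G := (S * A) \ T with hB2
  set C2 : Finset G := Finset.univ \ (S * A ∪ T) with hC2
  set C1 : Finset G := K \ (S * A) with hC1
  set A2 : Finset G := A \ (S * A) with hA2
  have hassoc : S * (S * A) = T := (mul_assoc S S A).symm
  -- A ⊆ T
  have hAT : A ⊆ T := by
    intro x hx
    have h1 : s₀⁻¹ ∈ S := hinv s₀ hs₀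
    have h2 : (s₀ * s₀⁻¹) * x ∈ S * S * A := mul_mem_mul (mul_mem_mul hs₀ h1) hx
    simpa using h2
  -- S * B2 ⊆ A2 ∪ C1
  have hSB2 : S * B2 ⊆ A2 ∪ C1 := by
    rw [mul_subset_iff]
    intro s hs g hg
    obtain ⟨hg1, hg2⟩ := mem_sdiff.mp hg
    have hsgT : s * g ∈ T := by rw [← hassoc]; exact mul_mem_mul hs hg1
    have hsgSA : s * g ∉ S * A := by
      intro h
      apply hg2
      rw [← hassoc]
      have h3 : s⁻¹ * (s * g) ∈ S * (S * A) := mul_mem_mul (hinv s hs) h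
      simpa using h3
    by_cases hA' : s * g ∈ A
    · exact mem_union_left _ (mem_sdiff.mpr ⟨hA', hsgSA⟩)
    · exact mem_union_right _
        (mem_sdiff.mpr ⟨mem_sdiff.mpr ⟨hsgT, hA'⟩, hsgSA⟩)
  -- (S * C2) \ C2 ⊆ C1
  have hSC2 : (S * C2) \ C2 ⊆ C1 := by
    intro g hg
    obtain ⟨hg1, hg2⟩ := mem_sdiff.mp hg
    obtain ⟨s, hs, y, hy, rfl⟩ := mem_mul.mp hg1
    have hyn : y ∉ S * A ∪ T := (mem_sdiff.mp hy).2
    have hySA : y ∉ S * A := fun h => hyn (mem_union_left _ h)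
    have hyT : y ∉ T := fun h => hyn (mem_union_right _ h)
    have h1 : s * y ∉ A := by
      intro h
      apply hySA
      have h3 : s⁻¹ * (s * y) ∈ S * A := mul_mem_mul (hinv s hs) h
      simpa using h3
    have h2 : s * y ∉ S * A := by
      intro h
      apply hyT
      rw [← hassoc]
      have h3 : s⁻¹ * (s * y) ∈ S * (S * A) := mul_mem_mul (hinv s hs) h
      simpa using h3
    have h3 : s * y ∈ T := by
      by_contra h4
      exact hg2 (mem_sdiff.mpr ⟨mem_univ _,
        fun h5 => (mem_union.mp h5).elim h2 h4⟩)
    exact mem_sdiff.mpr ⟨mem_sdiff.mpr ⟨h3, h1⟩, h2⟩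
  -- cardinal partition : n = |A| + |K| + |B2| + |C2|
  have hu1 : K.card + A.card = T.card := card_sdiff_add_card_eq_card hAT
  have hu2 : B2.card + T.card = (S * A ∪ T).card := card_sdiff_add_card (S * A) T
  have hu3 : C2.card + (S * A ∪ T).card = n := by
    have := card_sdiff_add_card_eq_card (subset_univ (S * A ∪ T))
    simpa [hn] using this
  have hnR : (n : ℝ) = A.card + K.card + B2.card + C2.card := by
    have : n = A.card + K.card + B2.card + C2.card := by omega
    exact_mod_cast congrArg (Nat.cast : ℕ → ℝ) this
  -- |K| ≤ β |A|
  have hkβ : (K.card : ℝ) ≤ β * A.card := hsmall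
  have hc1k : (C1.card : ℝ) ≤ K.card := by
    exact_mod_cast card_le_card (sdiff_subset : C1 ⊆ K)
  have hc1β : (C1.card : ℝ) ≤ β * A.card := le_trans hc1k hkβ
  have ha2 : ((A2.card : ℝ)) ≤ A.card := by
    exact_mod_cast card_le_card (sdiff_subset : A2 ⊆ A)
  -- b2 ≤ a2 + c1 via translation by s₀
  have hb2 : (B2.card : ℝ) ≤ (A2.card : ℝ) + C1.card := by
    have hsub : s₀ • B2 ⊆ A2 ∪ C1 := by
      intro x hx
      obtain ⟨y, hy, rfl⟩ := mem_smul_finset.mp hx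
      rw [smul_eq_mul]
      exact hSB2 (mul_mem_mul hs₀ hy)
    have h1 : B2.card ≤ (A2 ∪ C1).card := by
      rw [← card_smul_finset s₀ B2]
      exact card_le_card hsub
    have h2 : (A2 ∪ C1).card ≤ A2.card + C1.card := card_union_le _ _
    exact_mod_cast le_trans h1 h2
  -- expansion on C2 : ε c2 ≤ c1
  have hc2half : (C2.card : ℝ) ≤ (n : ℝ) / 2 := by
    have hsub : C2 ⊆ Finset.univ \ (A ∪ S * A) := by
      intro x hx
      obtain ⟨_, hx2⟩ := mem_sdiff.mp hx
      refine mem_sdiff.mpr ⟨mem_univ _, fun h => hx2 ?_⟩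
      rcases mem_union.mp h with h | h
      · exact mem_union_right _ (hAT h)
      · exact mem_union_left _ h
    have h1 : C2.card ≤ (Finset.univ \ (A ∪ S * A)).card := card_le_card hsub
    have h2 : (Finset.univ \ (A ∪ S * A)).card + (A ∪ S * A).card = n := by
      have := card_sdiff_add_card_eq_card (subset_univ (A ∪ S * A))
      simpa [hn] using this
    have h1R : (C2.card : ℝ) ≤ ((Finset.univ \ (A ∪ S * A)).card : ℝ) := by
      exact_mod_cast h1
    have h2R : ((Finset.univ \ (A ∪ S * A)).card : ℝ) + (A ∪ S * A).card = n := by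
      exact_mod_cast h2
    linarith
  have hc2exp : ε * C2.card ≤ (C1.card : ℝ) := by
    have h1 := hexp C2 hc2half
    have h2 : (((S * C2) \ C2).card : ℝ) ≤ C1.card := by
      exact_mod_cast card_le_card hSC2
    linarith
  have hc2pos : (0:ℝ) ≤ C2.card := by positivity
  have hc1pos : (0:ℝ) ≤ C1.card := by positivity
  have hb2pos : (0:ℝ) ≤ B2.card := by positivity
  have hkpos : (0:ℝ) ≤ K.card := by positivity
  -- the key scaled identity
  have hεr : ε * ((d:ℝ) * β / ε) = (d:ℝ) * β := by field_simp
  have hgoal : ε * (n:ℝ) ≤ ε * ((2 + β + (d:ℝ) * β / ε) * A.card) →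
      (n:ℝ) ≤ (2 + β + (d:ℝ) * β / ε) * A.card := by
    intro h
    exact le_of_mul_le_mul_left h hε
  have hexpand : ε * ((2 + β + (d:ℝ) * β / ε) * A.card)
      = 2 * ε * A.card + ε * β * A.card + (d:ℝ) * β * A.card := by
    field_simp
  -- case d = 1
  by_cases hd1 : d = 1
  · -- S = {s₀}, s₀⁻¹ = s₀, so T = A and K = ∅
    obtain ⟨x, hx⟩ := card_eq_one.mp (hd.trans hd1)
    have hxx : x * x = 1 := by
      have h1 : x⁻¹ ∈ S := hinv x (by simp [hx])
      rw [hx, mem_singleton] at h1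
      calc x * x = x * x⁻¹ := by rw [h1]
      _ = 1 := mul_inv_cancel x
    have hTA : T ⊆ A := by
      intro g hg
      rw [hT] at hg
      obtain ⟨b, hb, c, hc, rfl⟩ := mem_mul.mp hg
      obtain ⟨u, hu, v, hv, rfl⟩ := mem_mul.mp hb
      rw [hx, mem_singleton] at hu hv
      subst hu; subst hv
      rw [hxx, one_mul]
      exact hc
    have hK0 : (K.card : ℝ) = 0 := by
      have : K = ∅ := by
        rw [hK]
        exact sdiff_eq_empty_iff_subset.mpr hTA
      simp [this]
    have hc10 : (C1.card : ℝ) = 0 := le_antisymm (by linarith) hc1pos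
    have hc20 : (C2.card : ℝ) = 0 := by nlinarith
    rw [hd1]
    push_cast
    have h6 : (0:ℝ) ≤ β / ε * A.card := by positivity
    have h7 : (2 + β + 1 * β / ε) * (A.card:ℝ)
        = 2 * A.card + β * A.card + β / ε * A.card := by ring
    rw [h7]
    nlinarith [mul_nonneg hβ haR]
  -- now d ≥ 2
  have hd2 : (2:ℝ) ≤ (d:ℝ) := by
    have h1 : d ≠ 0 := by
      intro h
      rw [h] at hd
      exact hS (card_eq_zero.mp hd)
    have : 2 ≤ d := by omega
    exact_mod_cast this
  -- small n case
  by_cases hn2 : (n:ℝ) < 2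
  · have ha1 : (1:ℝ) ≤ A.card := by
      have : 1 ≤ A.card := card_pos.mpr (nonempty_iff_ne_empty.mpr hA)
      exact_mod_cast this
    have hn1 : (n:ℝ) ≤ 1 := by
      have : n ≤ 1 := by
        by_contra h
        push_neg at h
        have : (2:ℝ) ≤ n := by exact_mod_cast h
        linarith
      exact_mod_cast this
    nlinarith [mul_nonneg hβ haR, mul_nonneg hβdε haR]
  push_neg at hn2
  -- ε ≤ d
  have hεd : ε ≤ (d:ℝ) := by
    have h1 : (({(1:G)} : Finset G).card : ℝ) ≤ (n:ℝ)/2 := by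
      simp only [card_singleton]
      push_cast
      linarith
    have h2 := hexp {(1:G)} h1
    have h3 : ((S * ({(1:G)} : Finset G)).card : ℝ) ≤ (d:ℝ) := by
      have h4 : (S * ({(1:G)} : Finset G)).card ≤ S.card * ({(1:G)} : Finset G).card :=
        card_mul_le
      simp only [card_singleton, mul_one] at h4
      rw [hd] at h4
      exact_mod_cast h4
    have h5 : (((S * ({(1:G)} : Finset G)) \ {(1:G)}).card : ℝ)
        ≤ ((S * ({(1:G)} : Finset G)).card : ℝ) := by
      exact_mod_cast card_le_card (sdiff_subset)
    simp only [card_singleton] at h2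
    push_cast at h2
    linarith
  apply hgoal
  rw [hexpand]
  have e0 : ε * (n:ℝ) = ε * A.card + ε * K.card + ε * B2.card + ε * C2.card := by
    rw [hnR]; ring
  have e1 : ε * (K.card : ℝ) ≤ ε * (β * A.card) :=
    mul_le_mul_of_nonneg_left hkβ hε.le
  by_cases hcd : ε + 1 ≤ (d:ℝ)
  · -- chain: εn = εa + εk + εb2 + εc2 ≤ 2εa + εβa + (ε+1)c1 ≤ 2εa + εβa + dβa
    have e1b : ε * (B2.card : ℝ) ≤ ε * ((A.card:ℝ) + C1.card) :=
      mul_le_mul_of_nonneg_left (by linarith) hε.le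
    have e7 : (ε + 1) * (C1.card : ℝ) ≤ (d:ℝ) * C1.card :=
      mul_le_mul_of_nonneg_right hcd hc1pos
    have e8 : (d:ℝ) * (C1.card:ℝ) ≤ (d:ℝ) * (β * A.card) :=
      mul_le_mul_of_nonneg_left hc1β (by positivity)
    nlinarith [hc2exp]
  · push_neg at hcd
    have hε1 : (1:ℝ) < ε := by linarith
    by_cases hhalf : (n:ℝ)/2 ≤ (A.card : ℝ) + K.card
    · -- n ≤ 2a + 2k, then εn ≤ 2εa + 2εβa ≤ 2εa + εβa + dβa using ε ≤ d
      have e6 : ε * (n:ℝ) ≤ ε * (2 * A.card + 2 * K.card) :=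
        mul_le_mul_of_nonneg_left (by linarith) hε.le
      have e5 : ε * (β * (A.card:ℝ)) ≤ (d:ℝ) * (β * A.card) :=
        mul_le_mul_of_nonneg_right hεd (mul_nonneg hβ haR)
      nlinarith
    · push_neg at hhalf
      -- expansion applies to B2 : b2 ≤ a2 + c1 ≤ a + k ≤ n/2
      have hb2half : (B2.card : ℝ) ≤ (n:ℝ)/2 := by linarith
      have hb2exp : ε * (B2.card : ℝ) ≤ (A.card : ℝ) + C1.card := by
        have h1 := hexp B2 hb2half
        have h2 : (((S * B2) \ B2).card : ℝ) ≤ (A2.card : ℝ) + C1.card := by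
          have h3 : ((S * B2) \ B2) ⊆ A2 ∪ C1 :=
            le_trans sdiff_subset hSB2
          have h4 : ((S * B2) \ B2).card ≤ (A2 ∪ C1).card := card_le_card h3
          have h5 := card_union_le A2 C1
          exact_mod_cast le_trans h4 h5
        linarith
      -- εn = εa + εk + εb2 + εc2 ≤ εa + εβa + a + 2c1 ≤ 2εa + εβa + dβa
      have e3 : (A.card:ℝ) ≤ ε * A.card := le_mul_of_one_le_left haR hε1.le
      have e4 : 2 * (β * (A.card:ℝ)) ≤ (d:ℝ) * (β * A.card) :=
        mul_le_mul_of_nonneg_right hd2 (mul_nonneg hβ haR)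
      nlinarith [hc2exp, hc1β]
end

section
/- Let G be a finite group and S = S⁻¹ ⊆ G a symmetric set. Suppose S is ε-combinatorially expanding for some ε > 0, i.e. |SX \ X| ≥ ε|X| for every X ⊆ G with |X| ≤ |G|/2. Let β ≥ 0 and let A ⊆ G satisfy |A| ≤ |G|/2 and |S²A \ A| ≤ β·|A|. Then |A ∩ SA| ≤ (β/ε)·|A|. -/
open Finset
open scoped Pointwise

/-- If `S = S⁻¹ ⊆ G` is `ε`-combinatorially expanding, `β ≥ 0`,
and `A ⊆ G` satisfies `|A| ≤ |G|/2` and `|S²A \ A| ≤ β|A|`, then `|A ∩ SA| ≤ (β/ε)|A|`. -/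
theorem card_inter_mul_le {G : Type*} [Group G] [Fintype G] [DecidableEq G]
    (S : Finset G) (hSsymm : S⁻¹ = S) (ε : ℝ) (hε : 0 < ε)
    (hexp : ∀ X : Finset G, (X.card : ℝ) ≤ (Fintype.card G : ℝ) / 2 →
      ε * X.card ≤ (((S * X) \ X).card : ℝ))
    (β : ℝ) (hβ : 0 ≤ β) (A : Finset G)
    (hAhalf : (A.card : ℝ) ≤ (Fintype.card G : ℝ) / 2)
    (hsmall : (((S * S * A) \ A).card : ℝ) ≤ β * A.card) :
    ((A ∩ (S * A)).card : ℝ) ≤ β / ε * A.card := by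
  set X := A ∩ (S * A) with hXdef
  have hXA : X ⊆ A := inter_subset_left
  have hXSA : X ⊆ S * A := inter_subset_right
  have hXcard : (X.card : ℝ) ≤ A.card := by exact_mod_cast card_le_card hXA
  have h1 := hexp X (hXcard.trans hAhalf)
  have hsub : (S * X) \ X ⊆ (S * S * A) \ A := by
    intro y hy
    rw [mem_sdiff] at hy ⊢
    obtain ⟨hy1, hy2⟩ := hy
    have hySA : y ∈ S * A := mul_subset_mul_left hXA hy1
    have hyS2A : y ∈ S * S * A := by
      rw [mul_assoc]
      exact mul_subset_mul_left hXSA hy1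
    refine ⟨hyS2A, fun hyA => hy2 ?_⟩
    exact mem_inter.mpr ⟨hyA, hySA⟩
  have h2 : (((S * X) \ X).card : ℝ) ≤ ((S * S * A) \ A).card := by
    exact_mod_cast card_le_card hsub
  rw [div_mul_eq_mul_div, le_div_iff₀ hε]
  nlinarith
end

section
/- Let G be a finite group, S = S⁻¹ ⊆ G a symmetric set with |S| = d, and let ε, β > 0. Let A ⊆ G satisfy |SA ∩ A| ≤ (β/ε)·|A| and |G| ≤ (2 + β + dβ/ε)·|A|. Then for every s ∈ S and g ∈ G one has |sAg Δ (Ag)^c| ≤ β·(1 + d/ε + 2/ε)·|A| and |s(Ag)^c Δ Ag| ≤ β·(1 + d/ε + 2/ε)·|A|. -/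
open Finset
open scoped Pointwise symmDiff

private lemma mem_mul_singleton {G : Type*} [Group G] [DecidableEq G]
    {X : Finset G} {g x : G} : x ∈ X * {g} ↔ x * g⁻¹ ∈ X := by
  simp only [Finset.mem_mul, Finset.mem_singleton]
  constructor
  · rintro ⟨b, hb, c, rfl, rfl⟩; simpa using hb
  · intro h; exact ⟨x * g⁻¹, h, g, rfl, by group⟩

private lemma mem_singleton_mul' {G : Type*} [Group G] [DecidableEq G]
    {X : Finset G} {s x : G} : x ∈ {s} * X ↔ s⁻¹ * x ∈ X := by
  simp only [Finset.mem_mul, Finset.mem_singleton]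
  constructor
  · rintro ⟨b, rfl, c, hc, rfl⟩; simpa using hc
  · intro h; exact ⟨s, rfl, s⁻¹ * x, h, by group⟩

private lemma compl_mul_singleton {G : Type*} [Group G] [Fintype G] [DecidableEq G]
    (X : Finset G) (g : G) : (X * {g})ᶜ = Xᶜ * {g} := by
  ext x
  simp [mem_mul_singleton, Finset.mem_compl]

private lemma singleton_mul_compl {G : Type*} [Group G] [Fintype G] [DecidableEq G]
    (X : Finset G) (s : G) : {s} * Xᶜ = ({s} * X)ᶜ := by
  ext x
  simp [mem_singleton_mul', Finset.mem_compl]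

private lemma symmDiff_mul_singleton {G : Type*} [Group G] [DecidableEq G]
    (X Y : Finset G) (g : G) : (X ∆ Y) * {g} = (X * {g}) ∆ (Y * {g}) := by
  simp only [Finset.mul_singleton]
  exact Finset.image_symmDiff X Y (mul_left_injective g)

/-- If `S = S⁻¹ ⊆ G`, `|S| = d`, `ε, β > 0`, and `A ⊆ G` satisfies
`|SA ∩ A| ≤ (β/ε)|A|` and `|G| ≤ (2 + β + dβ/ε)|A|`, then for every `s ∈ S` and `g ∈ G`,
`|sAg Δ (Ag)ᶜ| ≤ β(1 + d/ε + 2/ε)|A|` and `|s(Ag)ᶜ Δ Ag| ≤ β(1 + d/ε + 2/ε)|A|`. -/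
theorem symmDiff_translate_bounds {G : Type*} [Group G] [Fintype G] [DecidableEq G]
    (S : Finset G) (d : ℕ) (hd : S.card = d) (hSsymm : S⁻¹ = S)
    (ε β : ℝ) (hε : 0 < ε) (hβ : 0 < β) (A : Finset G)
    (hinter : (((S * A) ∩ A).card : ℝ) ≤ β / ε * A.card)
    (hlower : (Fintype.card G : ℝ) ≤ (2 + β + d * β / ε) * A.card) :
    ∀ s ∈ S, ∀ g : G,
      ((({s} * A * {g}) ∆ ((A * {g})ᶜ)).card : ℝ) ≤ β * (1 + d / ε + 2 / ε) * A.card ∧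
      ((({s} * (A * {g})ᶜ) ∆ (A * {g})).card : ℝ) ≤ β * (1 + d / ε + 2 / ε) * A.card := by
  intro s hs g
  set B : Finset G := {s} * A with hB
  -- key bound on the untranslated symmDiff
  have key : ((B ∆ Aᶜ).card : ℝ) ≤ β * (1 + d / ε + 2 / ε) * A.card := by
    have hBA : B.card = A.card := Finset.card_singleton_mul s A
    have hsub : B ∩ A ⊆ (S * A) ∩ A :=
      Finset.inter_subset_inter
        (Finset.mul_subset_mul_right (Finset.singleton_subset_iff.2 hs)) le_rfl
    have hi : ((B ∩ A).card : ℝ) ≤ β / ε * A.card :=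
      le_trans (by exact_mod_cast Finset.card_le_card hsub) hinter
    have hsplit : (B ∆ Aᶜ).card = (B \ Aᶜ).card + (Aᶜ \ B).card := by
      rw [symmDiff_def, Finset.sup_eq_union,
        Finset.card_union_of_disjoint disjoint_sdiff_sdiff]
    have h1 : B \ Aᶜ = B ∩ A := by
      rw [Finset.sdiff_eq_inter_compl, compl_compl]
    have h2 : Aᶜ \ B = (A ∪ B)ᶜ := by
      rw [Finset.sdiff_eq_inter_compl, ← Finset.compl_union, Finset.union_comm]
    have hu : ((A ∪ B).card : ℝ) + ((A ∩ B).card : ℝ) = (A.card : ℝ) + B.card := by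
      exact_mod_cast Finset.card_union_add_card_inter A B
    have hcompl : (((A ∪ B)ᶜ).card : ℝ) = (Fintype.card G : ℝ) - (A ∪ B).card := by
      rw [Finset.card_compl]
      have := Finset.card_le_univ (A ∪ B)
      push_cast [Nat.cast_sub this]
      ring
    have hIBA : ((A ∩ B).card : ℝ) = ((B ∩ A).card : ℝ) := by rw [Finset.inter_comm]
    rw [hsplit, h1, h2]
    push_cast
    rw [hcompl]
    have : ((A ∪ B).card : ℝ) = (A.card : ℝ) + A.card - (B ∩ A).card := by
      rw [← hIBA] at *
      rw [hBA] at hu; linarith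
    rw [this]
    have hrhs : β * (1 + d / ε + 2 / ε) * (A.card : ℝ)
        = (2 + β + d * β / ε) * A.card - 2 * A.card + 2 * (β / ε * A.card) := by
      field_simp
      ring
    rw [hrhs]
    linarith [hi, hlower]
  constructor
  · have : ({s} * A * {g}) ∆ ((A * {g})ᶜ) = (B ∆ Aᶜ) * {g} := by
      rw [compl_mul_singleton, symmDiff_mul_singleton, hB]
    rw [this, Finset.card_mul_singleton]
    exact key
  · have heq : ({s} * (A * {g})ᶜ) ∆ (A * {g}) = (Bᶜ ∆ A) * {g} := by
      rw [compl_mul_singleton, ← mul_assoc, singleton_mul_compl, ← hB, symmDiff_mul_singleton]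
    have heq2 : Bᶜ ∆ A = B ∆ Aᶜ := by
      rw [← compl_symmDiff_compl B Aᶜ, compl_compl]
    rw [heq, Finset.card_mul_singleton, heq2]
    exact key
end

section
/- Let G be a finite group and S = S⁻¹ ⊆ G a symmetric set with |S| = d. Suppose S is ε-combinatorially expanding for some ε > 0, i.e. |SX \ X| ≥ ε|X| for every X ⊆ G with |X| ≤ |G|/2. Let β ≥ 0 and let A ⊆ G satisfy |A| ≤ |G|/2 and, for every s ∈ S and g ∈ G, |sAg Δ (Ag)^c| ≤ β·(1 + d/ε + 2/ε)·|A|. Then for every g ∈ G, either |A ∩ Ag| ≤ (dβ/ε²)·(ε + d + 2)·|A|, or |A ∩ Ag| ≥ (1 - (dβ/ε²)·(ε + d + 2))·|A|. -/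
open Finset
open scoped Pointwise symmDiff

/-- Suppose `S = S⁻¹ ⊆ G`, `|S| = d`, is `ε`-combinatorially expanding,
`β ≥ 0`, and `A ⊆ G` satisfies `|A| ≤ |G|/2` and, for every `s ∈ S` and `g ∈ G`,
`|sAg Δ (Ag)ᶜ| ≤ β(1 + d/ε + 2/ε)|A|`. Then for every `g ∈ G`, either
`|A ∩ Ag| ≤ (dβ/ε²)(ε + d + 2)|A|` or `|A ∩ Ag| ≥ (1 - (dβ/ε²)(ε + d + 2))|A|`. -/
theorem inter_translate_dichotomy {G : Type*} [Group G] [Fintype G] [DecidableEq G]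
    (S : Finset G) (d : ℕ) (hd : S.card = d) (hSsymm : S⁻¹ = S)
    (ε : ℝ) (hε : 0 < ε)
    (hexp : ∀ X : Finset G, (X.card : ℝ) ≤ (Fintype.card G : ℝ) / 2 →
      ε * X.card ≤ (((S * X) \ X).card : ℝ))
    (β : ℝ) (hβ : 0 ≤ β) (A : Finset G)
    (hAhalf : (A.card : ℝ) ≤ (Fintype.card G : ℝ) / 2)
    (hsymmdiff : ∀ s ∈ S, ∀ g : G,
      ((({s} * A * {g}) ∆ ((A * {g})ᶜ)).card : ℝ) ≤ β * (1 + d / ε + 2 / ε) * A.card) :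
    ∀ g : G,
      ((A ∩ (A * {g})).card : ℝ) ≤ d * β / ε ^ 2 * (ε + d + 2) * A.card ∨
      (1 - d * β / ε ^ 2 * (ε + d + 2)) * A.card ≤ ((A ∩ (A * {g})).card : ℝ) := by
  intro g
  set B := A * {g} with hBdef
  have hBcard : B.card = A.card := card_mul_singleton A g
  have hBr : (B.card : ℝ) = A.card := by exact_mod_cast hBcard
  set c : ℝ := β * (1 + d / ε + 2 / ε) * A.card with hcdef
  have hMc : d * c / ε = d * β / ε ^ 2 * (ε + d + 2) * A.card := by
    rw [hcdef]; field_simp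
  -- per-element symmetric difference bounds
  have hsB : ∀ s ∈ S, (((s • B) ∆ Bᶜ).card : ℝ) ≤ c := by
    intro s hs
    have := hsymmdiff s hs g
    rwa [mul_assoc, singleton_mul] at this
  have hsA : ∀ s ∈ S, (((s • A) ∆ Aᶜ).card : ℝ) ≤ c := by
    intro s hs
    have := hsymmdiff s hs 1
    rwa [mul_assoc, show ({1} : Finset G) = 1 from rfl, mul_one, singleton_mul] at this
  set W := A ∆ B with hWdef
  -- W is almost invariant under each s
  have hsW : ∀ s ∈ S, (((s • W) ∆ W).card : ℝ) ≤ c + c := by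
    intro s hs
    have h1 : (s • W) ∆ W = ((s • A) ∆ Aᶜ) ∆ ((s • B) ∆ Bᶜ) := by
      rw [hWdef, smul_finset_symmDiff, ← compl_symmDiff_compl (a := A) (b := B),
        symmDiff_symmDiff_symmDiff_comm]
    have h2 : ((s • A) ∆ Aᶜ) ∆ ((s • B) ∆ Bᶜ) ⊆ ((s • A) ∆ Aᶜ) ∪ ((s • B) ∆ Bᶜ) := by
      intro x hx
      have := Finset.mem_symmDiff.1 hx
      rw [mem_union]
      tauto
    calc (((s • W) ∆ W).card : ℝ)
        ≤ ((((s • A) ∆ Aᶜ) ∪ ((s • B) ∆ Bᶜ)).card : ℝ) := by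
          rw [h1]; exact_mod_cast card_le_card h2
      _ ≤ (((s • A) ∆ Aᶜ).card : ℝ) + (((s • B) ∆ Bᶜ).card : ℝ) := by
          exact_mod_cast card_union_le _ _
      _ ≤ c + c := add_le_add (hsA s hs) (hsB s hs)
  -- main expansion estimate for any almost-invariant set
  have main : ∀ V : Finset G, (∀ s ∈ S, (((s • V) ∆ V).card : ℝ) ≤ c + c) →
      (V.card : ℝ) ≤ (Fintype.card G : ℝ) / 2 → ε * V.card ≤ d * (c + c) := by
    intro V hV hVhalf
    have hsub : (S * V) \ V ⊆ S.biUnion fun s => (s • V) \ V := by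
      intro x hx
      rw [mem_sdiff, mem_mul] at hx
      obtain ⟨⟨s, hs, y, hy, rfl⟩, hxn⟩ := hx
      rw [mem_biUnion]
      exact ⟨s, hs, mem_sdiff.2 ⟨mem_smul_finset.2 ⟨y, hy, rfl⟩, hxn⟩⟩
    have h1 : (((S * V) \ V).card : ℝ) ≤ ∑ s ∈ S, (((s • V) \ V).card : ℝ) := by
      calc (((S * V) \ V).card : ℝ)
          ≤ ((S.biUnion fun s => (s • V) \ V).card : ℝ) := by
            exact_mod_cast card_le_card hsub
        _ ≤ ∑ s ∈ S, (((s • V) \ V).card : ℝ) := by exact_mod_cast card_biUnion_le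
    have h2 : ∑ s ∈ S, (((s • V) \ V).card : ℝ) ≤ ∑ s ∈ S, (c + c) := by
      refine Finset.sum_le_sum fun s hs => ?_
      have hsub2 : (s • V) \ V ⊆ (s • V) ∆ V := by
        intro x hx
        rw [mem_sdiff] at hx
        exact Finset.mem_symmDiff.2 (Or.inl ⟨hx.1, hx.2⟩)
      exact le_trans (by exact_mod_cast card_le_card hsub2) (hV s hs)
    have h3 : ∑ s ∈ S, (c + c) = (d : ℝ) * (c + c) := by
      rw [Finset.sum_const, hd, nsmul_eq_mul]
    calc ε * V.card ≤ (((S * V) \ V).card : ℝ) := hexp V hVhalf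
      _ ≤ ∑ s ∈ S, (((s • V) \ V).card : ℝ) := h1
      _ ≤ ∑ s ∈ S, (c + c) := h2
      _ = (d : ℝ) * (c + c) := h3
  by_cases hW : (W.card : ℝ) ≤ (Fintype.card G : ℝ) / 2
  · -- W small  ⇒  |A ∩ B| close to |A|
    right
    have hεW : ε * W.card ≤ d * (c + c) := main W hsW hW
    have e1' : ((A \ B).card : ℝ) = A.card - (A ∩ B).card := by
      have := congrArg (Nat.cast : ℕ → ℝ) (card_inter_add_card_sdiff A B)
      push_cast at this; linarith
    have e2' : ((B \ A).card : ℝ) = A.card - (A ∩ B).card := by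
      have := congrArg (Nat.cast : ℕ → ℝ) (card_inter_add_card_sdiff B A)
      push_cast at this
      rw [inter_comm] at this
      push_cast at this
      linarith [hBr]
    have hWcard : (W.card : ℝ) =
        ((A.card : ℝ) - (A ∩ B).card) + ((A.card : ℝ) - (A ∩ B).card) := by
      have hdis : Disjoint (A \ B) (B \ A) := disjoint_sdiff_sdiff
      have hnat : W.card = (A \ B).card + (B \ A).card := by
        rw [hWdef, symmDiff_def, sup_eq_union, card_union_of_disjoint hdis]
      rw [hnat]; push_cast; rw [e1', e2']
    have key : (A.card : ℝ) - (A ∩ B).card ≤ d * c / ε := by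
      rw [le_div_iff₀ hε]
      nlinarith [hεW, hWcard]
    have hid : (1 - d * β / ε ^ 2 * (ε + d + 2)) * (A.card : ℝ)
        = A.card - d * c / ε := by
      rw [show (1 - d * β / ε ^ 2 * (ε + d + 2)) * (A.card : ℝ)
          = (A.card : ℝ) - d * β / ε ^ 2 * (ε + d + 2) * A.card from by ring, ← hMc]
    rw [hid]
    linarith [key]
  · -- W large  ⇒  |A ∩ B| small
    left
    push_neg at hW
    have hWcompl : ((Wᶜ).card : ℝ) = (Fintype.card G : ℝ) - W.card := by
      rw [card_compl, Nat.cast_sub (card_le_univ W)]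
    have hWc_half : ((Wᶜ).card : ℝ) ≤ (Fintype.card G : ℝ) / 2 := by
      rw [hWcompl]; linarith
    have hsmul_compl : ∀ (s : G) (X : Finset G), s • Xᶜ = (s • X)ᶜ := by
      intro s X
      rw [compl_eq_univ_sdiff, compl_eq_univ_sdiff, smul_finset_sdiff, smul_finset_univ]
    have hsWc : ∀ s ∈ S, (((s • Wᶜ) ∆ Wᶜ).card : ℝ) ≤ c + c := by
      intro s hs
      rw [hsmul_compl, compl_symmDiff_compl]
      exact hsW s hs
    have hεWc : ε * (Wᶜ).card ≤ d * (c + c) := main Wᶜ hsWc hWc_half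
    have hWc_eq : Wᶜ = (A ∩ B) ∪ (Aᶜ ∩ Bᶜ) := by
      ext x
      simp only [mem_compl, hWdef, Finset.mem_symmDiff, mem_union, mem_inter, mem_compl]
      tauto
    have hdisj : Disjoint (A ∩ B) (Aᶜ ∩ Bᶜ) := by
      refine disjoint_left.2 fun x hx hx' => ?_
      simp only [mem_inter, mem_compl] at hx hx'
      exact hx'.1 hx.1
    have hWc_card : ((Wᶜ).card : ℝ) = ((A ∩ B).card : ℝ) + ((Aᶜ ∩ Bᶜ).card : ℝ) := by
      rw [hWc_eq]
      exact_mod_cast card_union_of_disjoint hdisj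
    have hcc : ((A ∩ B).card : ℝ) ≤ ((Aᶜ ∩ Bᶜ).card : ℝ) := by
      have h1 : Aᶜ ∩ Bᶜ = (A ∪ B)ᶜ := by
        ext x
        simp only [mem_inter, mem_compl, mem_union]
        tauto
      have h4 : (((A ∪ B)ᶜ).card : ℝ) = (Fintype.card G : ℝ) - (A ∪ B).card := by
        rw [card_compl, Nat.cast_sub (card_le_univ _)]
      have h3 : ((A ∪ B).card : ℝ) = (A.card : ℝ) + B.card - (A ∩ B).card := by
        have := congrArg (Nat.cast : ℕ → ℝ) (card_union_add_card_inter A B)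
        push_cast at this; linarith
      rw [h1, h4, h3, hBr]
      linarith [hAhalf]
    have hfin : ((A ∩ B).card : ℝ) ≤ d * c / ε := by
      rw [le_div_iff₀ hε]
      nlinarith [hεWc, hWc_card, mul_le_mul_of_nonneg_left hcc hε.le]
    rw [← hMc]
    exact hfin
end

section
/- Let G be a finite group, A ⊆ G a nonempty subset, and 0 ≤ z < 1/3. Suppose that for every g ∈ G, either |A ∩ Ag| ≤ z·|A| or |A ∩ Ag| ≥ (1-z)·|A|. Then H := {g ∈ G : |A ∩ Ag| ≥ (1-z)·|A|} is a subgroup of G. -/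
open Finset
open scoped Pointwise

/-- Let `A ⊆ G` be nonempty and `0 ≤ z < 1/3`. If for every `g ∈ G`
either `|A ∩ Ag| ≤ z|A|` or `|A ∩ Ag| ≥ (1-z)|A|`, then
`H = {g : |A ∩ Ag| ≥ (1-z)|A|}` is a subgroup of `G`. -/
theorem subgroup_of_dichotomy {G : Type*} [Group G] [Fintype G] [DecidableEq G]
    (A : Finset G) (hA : A.Nonempty) (z : ℝ) (hz0 : 0 ≤ z) (hz : z < 1 / 3)
    (hdich : ∀ g : G, ((A ∩ (A * {g})).card : ℝ) ≤ z * (A.card : ℝ) ∨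
      (1 - z) * (A.card : ℝ) ≤ ((A ∩ (A * {g})).card : ℝ)) :
    ∃ H : Subgroup G, ∀ g : G,
      g ∈ H ↔ (1 - z) * (A.card : ℝ) ≤ ((A ∩ (A * {g})).card : ℝ) := by
  have hApos : (0:ℝ) < (A.card : ℝ) := by exact_mod_cast hA.card_pos
  have himage : ∀ (B : Finset G) (g : G), B * {g} = B.image (· * g) := by
    intro B g
    ext x
    simp only [mem_mul, mem_singleton, mem_image]
    constructor
    · rintro ⟨y, hy, b, rfl, rfl⟩; exact ⟨y, hy, rfl⟩
    · rintro ⟨y, hy, rfl⟩; exact ⟨y, hy, g, rfl, rfl⟩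
  have hone : A * ({1} : Finset G) = A := by simp [himage]
  -- symmetry: |A ∩ Ag⁻¹| = |A ∩ Ag|
  have hsymm : ∀ g : G, (A ∩ (A * {g⁻¹})).card = (A ∩ (A * {g})).card := by
    intro g
    apply Finset.card_bij (fun x _ => x * g)
    · intro x hx
      simp only [mem_inter, himage, mem_image] at hx ⊢
      obtain ⟨hx1, a, ha, rfl⟩ := hx
      exact ⟨by simpa using ha, ⟨a * g⁻¹, hx1, rfl⟩⟩
    · intro x hx y hy h
      exact mul_right_cancel h
    · intro y hy
      simp only [mem_inter, himage, mem_image] at hy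
      obtain ⟨hy1, a, ha, rfl⟩ := hy
      refine ⟨a, ?_, rfl⟩
      simp only [mem_inter, himage, mem_image]
      exact ⟨ha, ⟨a * g, hy1, by group⟩⟩
  -- cardinality of sdiff in terms of intersection
  have hsdiff : ∀ g : G, ((A \ (A * {g})).card : ℝ)
      = (A.card : ℝ) - ((A ∩ (A * {g})).card : ℝ) := by
    intro g
    have h := Finset.card_sdiff_add_card_inter A (A * {g})
    have : ((A \ (A * {g})).card : ℝ) + ((A ∩ (A * {g})).card : ℝ) = (A.card : ℝ) := by
      exact_mod_cast congrArg (Nat.cast : ℕ → ℝ) h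
    linarith
  let S : Set G := setOf (fun g => (1 - z) * (A.card : ℝ) ≤ ((A ∩ (A * {g})).card : ℝ))
  refine ⟨{ carrier := S, one_mem' := ?_, mul_mem' := ?_, inv_mem' := ?_ }, fun g => Iff.rfl⟩
  · rintro a b (ha : (1 - z) * _ ≤ _) (hb : (1 - z) * _ ≤ _)
    show (1 - z) * (A.card : ℝ) ≤ ((A ∩ (A * {a * b})).card : ℝ)
    have hab : A * {a * b} = (A * {a}) * {b} := by
      rw [mul_assoc, singleton_mul_singleton]
    -- A \ A(ab) ⊆ (A \ Ab) ∪ (Ab \ A(ab))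
    have hsub : A \ (A * {a * b}) ⊆ (A \ (A * {b})) ∪ ((A * {b}) \ (A * {a * b})) := by
      intro x hx
      simp only [mem_sdiff, mem_union] at hx ⊢
      by_cases h : x ∈ A * {b}
      · exact Or.inr ⟨h, hx.2⟩
      · exact Or.inl ⟨hx.1, h⟩
    -- Ab \ A(ab) = (A \ Aa)·b
    have himg : (A * {b}) \ (A * {a * b}) = (A \ (A * {a})) * {b} := by
      rw [hab, himage (A \ (A * {a})) b, himage A b, himage (A * {a}) b]
      exact (Finset.image_sdiff _ _ (mul_left_injective b)).symm
    have hcard1 : ((A * {b}) \ (A * {a * b})).card = (A \ (A * {a})).card := by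
      rw [himg, himage]
      exact Finset.card_image_of_injective _ (mul_left_injective b)
    have hle : ((A \ (A * {a * b})).card : ℝ)
        ≤ ((A \ (A * {b})).card : ℝ) + ((A \ (A * {a})).card : ℝ) := by
      have := Finset.card_le_card hsub
      have h2 := Finset.card_union_le (A \ (A * {b})) ((A * {b}) \ (A * {a * b}))
      have : (A \ (A * {a * b})).card
          ≤ (A \ (A * {b})).card + (A \ (A * {a})).card := by omega
      exact_mod_cast this
    rw [hsdiff, hsdiff, hsdiff] at hle
    rcases hdich (a * b) with h | h
    · nlinarith
    · exact h
  · show (1 - z) * (A.card : ℝ) ≤ _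
    rw [hone, Finset.inter_self]
    nlinarith
  · rintro a (ha : (1 - z) * _ ≤ _)
    show (1 - z) * (A.card : ℝ) ≤ ((A ∩ (A * {a⁻¹})).card : ℝ)
    rw [hsymm a]
    exact ha
end

section
/- Let G be a finite group, A ⊆ G a nonempty subset, z ≥ 0, and let H = {g ∈ G : |A ∩ Ag| ≥ (1-z)·|A|}. Suppose that |A ∩ Ag| ≤ z·|A| for every g ∈ G \ H. Then |A| ≤ |H| + z·(|G| - |H|). -/
open Finset
open scoped Pointwise

lemma inter_mul_singleton_eq {G : Type*} [Group G] [DecidableEq G] (A : Finset G) (g : G) :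
    A ∩ (A * {g}) = A.filter (fun b => b * g⁻¹ ∈ A) := by
  ext b
  simp only [Finset.mem_inter, Finset.mem_filter, Finset.mem_mul, Finset.mem_singleton]
  constructor
  · rintro ⟨hb, a, ha, x, rfl, rfl⟩
    exact ⟨hb, by simpa using ha⟩
  · rintro ⟨hb, ha⟩
    exact ⟨hb, b * g⁻¹, ha, g, rfl, by group⟩

lemma sum_inter_card {G : Type*} [Group G] [Fintype G] [DecidableEq G] (A : Finset G) :
    ∑ g : G, (A ∩ (A * {g})).card = A.card * A.card := by
  have h1 : ∀ g : G, (A ∩ (A * {g})).card = ∑ b ∈ A, if b * g⁻¹ ∈ A then 1 else 0 := by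
    intro g
    rw [inter_mul_singleton_eq, Finset.card_filter]
  simp_rw [h1]
  rw [Finset.sum_comm]
  have h2 : ∀ b ∈ A, (∑ g : G, if b * g⁻¹ ∈ A then 1 else 0) = A.card := by
    intro b _
    rw [← Finset.card_filter]
    have : Finset.univ.filter (fun g : G => b * g⁻¹ ∈ A) = A.image (fun a => a⁻¹ * b) := by
      ext g
      simp only [Finset.mem_filter, Finset.mem_univ, true_and, Finset.mem_image]
      constructor
      · intro h; exact ⟨b * g⁻¹, h, by group⟩
      · rintro ⟨a, ha, rfl⟩; simpa [mul_assoc] using ha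
    rw [this, Finset.card_image_of_injective _ (fun x y h => by
      have := mul_right_cancel h; exact inv_injective this)]
  rw [Finset.sum_congr rfl h2, Finset.sum_const, smul_eq_mul]

/-- Let `A ⊆ G` be nonempty, `z ≥ 0`, and
`H = {g ∈ G : |A ∩ Ag| ≥ (1-z)|A|}`. If `|A ∩ Ag| ≤ z|A|` for every `g ∉ H`, then
`|A| ≤ |H| + z(|G| - |H|)`. -/
theorem card_le_of_dichotomy {G : Type*} [Group G] [Fintype G] [DecidableEq G]
    (A : Finset G) (hA : A.Nonempty) (z : ℝ) (hz : 0 ≤ z)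
    (H : Finset G)
    (hH : H = Finset.univ.filter
      (fun g : G => (1 - z) * (A.card : ℝ) ≤ ((A ∩ (A * {g})).card : ℝ)))
    (hsmall : ∀ g : G, g ∉ H → ((A ∩ (A * {g})).card : ℝ) ≤ z * (A.card : ℝ)) :
    (A.card : ℝ) ≤ (H.card : ℝ) + z * ((Fintype.card G : ℝ) - (H.card : ℝ)) := by
  have hApos : (0 : ℝ) < A.card := by exact_mod_cast Finset.card_pos.mpr hA
  have hsum : (A.card : ℝ) * A.card = ∑ g : G, ((A ∩ (A * {g})).card : ℝ) := by
    rw [← Nat.cast_sum]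
    exact_mod_cast (sum_inter_card A).symm
  have hsplit : (Finset.univ : Finset G) = H ∪ Hᶜ := by simp
  have hsum2 : ∑ g : G, ((A ∩ (A * {g})).card : ℝ)
      = ∑ g ∈ H, ((A ∩ (A * {g})).card : ℝ) + ∑ g ∈ Hᶜ, ((A ∩ (A * {g})).card : ℝ) := by
    exact (Finset.sum_add_sum_compl H _).symm
  have hbound1 : ∑ g ∈ H, ((A ∩ (A * {g})).card : ℝ) ≤ H.card * A.card := by
    calc ∑ g ∈ H, ((A ∩ (A * {g})).card : ℝ) ≤ ∑ g ∈ H, (A.card : ℝ) := by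
          apply Finset.sum_le_sum
          intro g _
          exact_mod_cast Finset.card_le_card (Finset.inter_subset_left)
      _ = _ := by rw [Finset.sum_const, nsmul_eq_mul]
  have hbound2 : ∑ g ∈ Hᶜ, ((A ∩ (A * {g})).card : ℝ) ≤ (Hᶜ.card : ℝ) * (z * A.card) := by
    calc ∑ g ∈ Hᶜ, ((A ∩ (A * {g})).card : ℝ) ≤ ∑ g ∈ Hᶜ, z * (A.card : ℝ) := by
          apply Finset.sum_le_sum
          intro g hg
          exact hsmall g (Finset.mem_compl.mp hg)
      _ = _ := by rw [Finset.sum_const, nsmul_eq_mul]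
  have hcompl : (Hᶜ.card : ℝ) = (Fintype.card G : ℝ) - H.card := by
    rw [Finset.card_compl]
    have := Finset.card_le_univ H
    push_cast [Nat.cast_sub (Finset.card_le_univ H)]
    simp
  have key : (A.card : ℝ) * A.card ≤ (H.card + z * ((Fintype.card G : ℝ) - H.card)) * A.card := by
    rw [hsum, hsum2]
    calc _ ≤ (H.card : ℝ) * A.card + (Hᶜ.card : ℝ) * (z * A.card) :=
          add_le_add hbound1 hbound2
      _ = _ := by rw [hcompl]; ring
  exact le_of_mul_le_mul_right (by linarith [key]) hApos
end
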